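/- For every τ ∈ Λ²₊V and all X, Y ∈ V with ⟨X,Y⟩ = 0, the 2-vector X∧(K_τY) − (K_τX)∧Y is orthogonal to Λ²₊V, i.e. it lies in Λ²₋V. -/

import Mathlib

open scoped RealInnerProductSpace

/-! Fix a positively oriented orthonormal basis `e₀, …, e₃` of `V`. The `eᵢ ∧ eⱼ` span `L` and
`⟨z, eᵢ ∧ eⱼ⟩` are (half) the coordinates of `z`, so `⋆` is determined by its values on them; it is
self-adjoint, and `⋆σ = ±σ` is read off from the relations `⟨σ, e₂∧e₃⟩ = ±⟨σ, e₀∧e₁⟩`,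
`⟨σ, e₁∧e₃⟩ = ∓⟨σ, e₀∧e₂⟩`, `⟨σ, e₁∧e₂⟩ = ±⟨σ, e₀∧e₃⟩`. Since `⟨K_τ Z, eⱼ⟩ = 2 ∑ₖ ⟨Z, eₖ⟩⟨τ, eₖ∧eⱼ⟩`,
the self-dual relations of `τ` turn the coordinates of `ω = X∧K_τY − K_τX∧Y` into the anti-self-dual
relations up to multiples of `∑ₖ ⟨X, eₖ⟩⟨Y, eₖ⟩ = ⟨X, Y⟩ = 0`. Hence `⋆ω = −ω`, and `ω ⊥ Λ²₊V` because
`⋆` is self-adjoint. -/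

section Wedge

variable {V L : Type*} [NormedAddCommGroup V] [InnerProductSpace ℝ V]
  [NormedAddCommGroup L] [InnerProductSpace ℝ L] (wedge : V →ₗ[ℝ] V →ₗ[ℝ] L)

structure IsWedgeProduct : Prop where
  apply_self : ∀ v, wedge v v = 0
  span_eq_top : Submodule.span ℝ {x : L | ∃ u v : V, wedge u v = x} = ⊤
  inner_apply_apply : ∀ v₁ v₂ v₃ v₄ : V,
    ⟪wedge v₁ v₂, wedge v₃ v₄⟫ = (1 / 2) * (⟪v₁, v₃⟫ * ⟪v₂, v₄⟫ - ⟪v₁, v₄⟫ * ⟪v₂, v₃⟫)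

variable {wedge}

theorem wedge_swap (wedge_self : ∀ v, wedge v v = 0) (u v : V) : wedge v u = -wedge u v := by
  have h := wedge_self (u + v)
  simp only [map_add, LinearMap.add_apply, wedge_self, zero_add, add_zero] at h
  exact eq_neg_of_add_eq_zero_left h

theorem wedge_eq_sum {ι : Type*} [Fintype ι] (b : OrthonormalBasis ι ℝ V) (u v : V) :
    wedge u v = ∑ i, ∑ j, (⟪u, b i⟫ * ⟪v, b j⟫) • wedge (b i) (b j) := by
  conv_lhs => rw [← b.sum_repr' u, ← b.sum_repr' v]
  simp only [map_sum, map_smul, LinearMap.sum_apply, LinearMap.smul_apply, Finset.smul_sum,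
    smul_smul, real_inner_comm]
  rw [Finset.sum_comm]
  simp only [mul_comm]

theorem IsWedgeProduct.sum_inner_smul {ι : Type*} [Fintype ι] (hw : IsWedgeProduct wedge)
    (b : OrthonormalBasis ι ℝ V) (z : L) :
    ∑ i, ∑ j, ⟪z, wedge (b i) (b j)⟫ • wedge (b i) (b j) = z := by
  have hz : z ∈ Submodule.span ℝ {x : L | ∃ u v : V, wedge u v = x} := hw.span_eq_top ▸ trivial
  induction hz using Submodule.span_induction with
  | mem x hx =>
    obtain ⟨u, v, rfl⟩ := hx
    set S := ∑ i, ∑ j, (⟪u, b i⟫ * ⟪v, b j⟫) • wedge (b i) (b j)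
    have hswap : ∑ i, ∑ j, (⟪u, b j⟫ * ⟪v, b i⟫) • wedge (b i) (b j) = -S := by
      rw [Finset.sum_comm]
      simp only [S, ← Finset.sum_neg_distrib, ← smul_neg, ← wedge_swap hw.apply_self]
    calc ∑ i, ∑ j, ⟪wedge u v, wedge (b i) (b j)⟫ • wedge (b i) (b j)
        = (1 / 2 : ℝ) • (S - ∑ i, ∑ j, (⟪u, b j⟫ * ⟪v, b i⟫) • wedge (b i) (b j)) := by
          simp only [hw.inner_apply_apply, S, ← Finset.sum_sub_distrib, Finset.smul_sum,
            ← sub_smul, smul_smul]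
      _ = wedge u v := by rw [hswap, wedge_eq_sum b]; module
  | zero => simp
  | add x y _ _ hx hy =>
    simp only [inner_add_left, add_smul, Finset.sum_add_distrib, hx, hy]
  | smul r x _ hx =>
    simp only [real_inner_smul_left, mul_smul, ← Finset.smul_sum, hx]

variable (b : OrthonormalBasis (Fin 4) ℝ V)

theorem IsWedgeProduct.sum_inner_smul_fin_four (hw : IsWedgeProduct wedge) (z : L) :
    (2 * ⟪z, wedge (b 0) (b 1)⟫) • wedge (b 0) (b 1)
      + (2 * ⟪z, wedge (b 0) (b 2)⟫) • wedge (b 0) (b 2)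
      + (2 * ⟪z, wedge (b 0) (b 3)⟫) • wedge (b 0) (b 3)
      + (2 * ⟪z, wedge (b 1) (b 2)⟫) • wedge (b 1) (b 2)
      + (2 * ⟪z, wedge (b 1) (b 3)⟫) • wedge (b 1) (b 3)
      + (2 * ⟪z, wedge (b 2) (b 3)⟫) • wedge (b 2) (b 3) = z := by
  conv_rhs => rw [← hw.sum_inner_smul b z]
  have hswap := wedge_swap hw.apply_self
  simp only [Fin.sum_univ_four, hw.apply_self, hswap (b 0), hswap (b 1) (b 2), hswap (b 1) (b 3),
    hswap (b 2) (b 3), inner_neg_right, inner_zero_right]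
  module

variable (wedge) in
structure HodgeOnBasis (hodge : L →ₗ[ℝ] L) : Prop where
  wedge01 : hodge (wedge (b 0) (b 1)) = wedge (b 2) (b 3)
  wedge02 : hodge (wedge (b 0) (b 2)) = -wedge (b 1) (b 3)
  wedge03 : hodge (wedge (b 0) (b 3)) = wedge (b 1) (b 2)
  wedge12 : hodge (wedge (b 1) (b 2)) = wedge (b 0) (b 3)
  wedge13 : hodge (wedge (b 1) (b 3)) = -wedge (b 0) (b 2)
  wedge23 : hodge (wedge (b 2) (b 3)) = wedge (b 0) (b 1)

variable {b} {hodge : L →ₗ[ℝ] L}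

theorem HodgeOnBasis.of_involutive (wedge_self : ∀ v, wedge v v = 0)
    (hodge_hodge : ∀ x, hodge (hodge x) = x)
    (h01 : hodge (wedge (b 0) (b 1)) = wedge (b 2) (b 3))
    (h02 : hodge (wedge (b 0) (b 2)) = wedge (b 3) (b 1))
    (h03 : hodge (wedge (b 0) (b 3)) = wedge (b 1) (b 2)) : HodgeOnBasis wedge b hodge where
  wedge01 := h01
  wedge02 := by rw [h02, wedge_swap wedge_self]
  wedge03 := h03
  wedge12 := by rw [← h03, hodge_hodge]
  wedge13 := by rw [wedge_swap wedge_self (b 3), map_neg, ← h02, hodge_hodge]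
  wedge23 := by rw [← h01, hodge_hodge]

theorem HodgeOnBasis.isSymmetric (hw : IsWedgeProduct wedge) (h : HodgeOnBasis wedge b hodge) :
    hodge.IsSymmetric := by
  have inner_hodge : ∀ z w, ⟪hodge z, w⟫ = 2 * (⟪z, wedge (b 0) (b 1)⟫ * ⟪w, wedge (b 2) (b 3)⟫
      + ⟪z, wedge (b 2) (b 3)⟫ * ⟪w, wedge (b 0) (b 1)⟫
      - ⟪z, wedge (b 0) (b 2)⟫ * ⟪w, wedge (b 1) (b 3)⟫
      - ⟪z, wedge (b 1) (b 3)⟫ * ⟪w, wedge (b 0) (b 2)⟫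
      + ⟪z, wedge (b 0) (b 3)⟫ * ⟪w, wedge (b 1) (b 2)⟫
      + ⟪z, wedge (b 1) (b 2)⟫ * ⟪w, wedge (b 0) (b 3)⟫) := by
    intro z w
    conv_lhs => rw [real_inner_comm, ← hw.sum_inner_smul_fin_four b z]
    simp only [map_add, map_smul, h.wedge01, h.wedge02, h.wedge03, h.wedge12, h.wedge13,
      h.wedge23, inner_add_right, real_inner_smul_right, inner_neg_right]
    ring
  intro z w
  rw [inner_hodge, real_inner_comm (hodge w), inner_hodge]
  ring

theorem HodgeOnBasis.inner_wedge_of_eq_self (hw : IsWedgeProduct wedge)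
    (h : HodgeOnBasis wedge b hodge) {σ : L} (hσ : hodge σ = σ) :
    ⟪σ, wedge (b 2) (b 3)⟫ = ⟪σ, wedge (b 0) (b 1)⟫ ∧
      ⟪σ, wedge (b 1) (b 3)⟫ = -⟪σ, wedge (b 0) (b 2)⟫ ∧
      ⟪σ, wedge (b 1) (b 2)⟫ = ⟪σ, wedge (b 0) (b 3)⟫ := by
  have hsymm := h.isSymmetric hw
  refine ⟨?_, ?_, ?_⟩
  · rw [← h.wedge23, ← hsymm, hσ]
  · rw [← inner_neg_right, ← h.wedge13, ← hsymm, hσ]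
  · rw [← h.wedge12, ← hsymm, hσ]

theorem HodgeOnBasis.eq_neg_of_inner_wedge (hw : IsWedgeProduct wedge)
    (h : HodgeOnBasis wedge b hodge) {z : L}
    (h01 : ⟪z, wedge (b 2) (b 3)⟫ = -⟪z, wedge (b 0) (b 1)⟫)
    (h02 : ⟪z, wedge (b 1) (b 3)⟫ = ⟪z, wedge (b 0) (b 2)⟫)
    (h03 : ⟪z, wedge (b 1) (b 2)⟫ = -⟪z, wedge (b 0) (b 3)⟫) : hodge z = -z := by
  rw [← hw.sum_inner_smul_fin_four b z]
  simp only [map_add, map_smul, h.wedge01, h.wedge02, h.wedge03, h.wedge12, h.wedge13,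
    h.wedge23, h01, h02, h03]
  module

theorem inner_apply_basis_eq_sum {ι : Type*} [Fintype ι] {τ : L} {K : V →ₗ[ℝ] V}
    (hK : ∀ X Y, ⟪K X, Y⟫ = 2 * ⟪τ, wedge X Y⟫) (b : OrthonormalBasis ι ℝ V) (Z : V) (j : ι) :
    ⟪K Z, b j⟫ = 2 * ∑ k, ⟪Z, b k⟫ * ⟪τ, wedge (b k) (b j)⟫ := by
  conv_lhs => rw [hK, ← b.sum_repr' Z]
  simp only [map_sum, map_smul, LinearMap.sum_apply, LinearMap.smul_apply, inner_sum,
    real_inner_smul_right, real_inner_comm Z]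

theorem inner_wedge_sub_wedge_of_inner_eq_zero (hw : IsWedgeProduct wedge) {τ : L}
    (hτ : ⟪τ, wedge (b 2) (b 3)⟫ = ⟪τ, wedge (b 0) (b 1)⟫ ∧
      ⟪τ, wedge (b 1) (b 3)⟫ = -⟪τ, wedge (b 0) (b 2)⟫ ∧
      ⟪τ, wedge (b 1) (b 2)⟫ = ⟪τ, wedge (b 0) (b 3)⟫)
    {K : V →ₗ[ℝ] V} (hK : ∀ X Y, ⟪K X, Y⟫ = 2 * ⟪τ, wedge X Y⟫) {X Y : V} (hXY : ⟪X, Y⟫ = 0) :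
    ⟪wedge X (K Y) - wedge (K X) Y, wedge (b 2) (b 3)⟫ =
        -⟪wedge X (K Y) - wedge (K X) Y, wedge (b 0) (b 1)⟫ ∧
      ⟪wedge X (K Y) - wedge (K X) Y, wedge (b 1) (b 3)⟫ =
        ⟪wedge X (K Y) - wedge (K X) Y, wedge (b 0) (b 2)⟫ ∧
      ⟪wedge X (K Y) - wedge (K X) Y, wedge (b 1) (b 2)⟫ =
        -⟪wedge X (K Y) - wedge (K X) Y, wedge (b 0) (b 3)⟫ := by
  obtain ⟨hτ01, hτ02, hτ03⟩ := hτ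
  have hτ_self (i : Fin 4) : ⟪τ, wedge (b i) (b i)⟫ = 0 := by
    rw [hw.apply_self, inner_zero_right]
  have hτ_swap (i j : Fin 4) : ⟪τ, wedge (b j) (b i)⟫ = -⟪τ, wedge (b i) (b j)⟫ := by
    rw [wedge_swap hw.apply_self, inner_neg_right]
  have hXY' : ⟪X, b 0⟫ * ⟪Y, b 0⟫ + ⟪X, b 1⟫ * ⟪Y, b 1⟫ + ⟪X, b 2⟫ * ⟪Y, b 2⟫
      + ⟪X, b 3⟫ * ⟪Y, b 3⟫ = 0 := by
    simpa only [← b.sum_inner_mul_inner X Y, Fin.sum_univ_four, real_inner_comm Y] using hXY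
  simp only [inner_sub_left, hw.inner_apply_apply, inner_apply_basis_eq_sum hK b,
    Fin.sum_univ_four, hτ_self, hτ_swap 0, hτ_swap 1 2, hτ_swap 1 3, hτ_swap 2 3,
    hτ01, hτ02, hτ03]
  refine ⟨?_, ?_, ?_⟩
  · linear_combination (2 * ⟪τ, wedge (b 0) (b 1)⟫) * hXY'
  · linear_combination (-2 * ⟪τ, wedge (b 0) (b 2)⟫) * hXY'
  · linear_combination (2 * ⟪τ, wedge (b 0) (b 3)⟫) * hXY'

end Wedge

/-- Let `V` be a 4-dimensional oriented real inner product space with Hodge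
star `⋆` on `Λ²V`.  For every `τ ∈ Λ²₊V` and all `X, Y ∈ V` with `⟨X,Y⟩ = 0`, the 2-vector
`X∧(K_τY) − (K_τX)∧Y` is orthogonal to `Λ²₊V`, i.e. it lies in `Λ²₋V`. -/
theorem stmt_9 {V L : Type*}
    [NormedAddCommGroup V] [InnerProductSpace ℝ V]
    [NormedAddCommGroup L] [InnerProductSpace ℝ L]
    (h4 : Module.finrank ℝ V = 4)
    (o : Orientation ℝ V (Fin 4))
    (wedge : V →ₗ[ℝ] V →ₗ[ℝ] L)
    (wedge_self : ∀ v : V, wedge v v = 0)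
    (wedge_span : Submodule.span ℝ {x : L | ∃ u v : V, wedge u v = x} = ⊤)
    (inner_wedge : ∀ v₁ v₂ v₃ v₄ : V,
      ⟪wedge v₁ v₂, wedge v₃ v₄⟫ =
        (1 / 2) * (⟪v₁, v₃⟫ * ⟪v₂, v₄⟫ - ⟪v₁, v₄⟫ * ⟪v₂, v₃⟫))
    (hodge : L →ₗ[ℝ] L)
    (hodge_hodge : ∀ x : L, hodge (hodge x) = x)
    (hodge_wedge : ∀ b : OrthonormalBasis (Fin 4) ℝ V, b.toBasis.orientation = o →
      hodge (wedge (b 0) (b 1)) = wedge (b 2) (b 3) ∧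
      hodge (wedge (b 0) (b 2)) = wedge (b 3) (b 1) ∧
      hodge (wedge (b 0) (b 3)) = wedge (b 1) (b 2))
    (τ : L) (hτ : hodge τ = τ)
    (K : V →ₗ[ℝ] V)
    (hK : ∀ X Y : V, ⟪K X, Y⟫ = 2 * ⟪τ, wedge X Y⟫) :
    ∀ X Y : V, ⟪X, Y⟫ = 0 →
      (∀ ρ : L, hodge ρ = ρ → ⟪wedge X (K Y) - wedge (K X) Y, ρ⟫ = 0) ∧
      hodge (wedge X (K Y) - wedge (K X) Y) = -(wedge X (K Y) - wedge (K X) Y) := by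
  intro X Y hXY
  obtain ⟨b, hb⟩ : ∃ b : OrthonormalBasis (Fin 4) ℝ V, b.toBasis.orientation = o :=
    ⟨_, o.finOrthonormalBasis_orientation (by norm_num) h4⟩
  have hw : IsWedgeProduct wedge := ⟨wedge_self, wedge_span, inner_wedge⟩
  obtain ⟨h01, h02, h03⟩ := hodge_wedge b hb
  have h := HodgeOnBasis.of_involutive wedge_self hodge_hodge h01 h02 h03
  obtain ⟨hω01, hω02, hω03⟩ :=
    inner_wedge_sub_wedge_of_inner_eq_zero hw (h.inner_wedge_of_eq_self hw hτ) hK hXY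
  have hanti := h.eq_neg_of_inner_wedge hw hω01 hω02 hω03
  refine ⟨fun ρ hρ => ?_, hanti⟩
  have hsymm := h.isSymmetric hw (wedge X (K Y) - wedge (K X) Y) ρ
  rw [hanti, hρ, inner_neg_left] at hsymm
  linarith
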